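/- arXiv:1508.06670 — 7 statements merged into one kernel-verified Lean document; each statement's English description precedes it below -/
import Mathlib

section
/- Let R be a commutative ring, u, v ∈ R, and l ≥ 1. Let A be an l × (l−1) matrix over R and let β, γ ∈ R^l be column vectors. Let M be the (l+2) × (l+2) matrix over R whose first row is (u, 0, −u, 0, …, 0), whose second row is (−1, v, 0, 0, …, 0), and whose (i+2)-nd row (for 1 ≤ i ≤ l) is (β_i, 0, γ_i, A_{i,1}, …, A_{i,l−1}). Then det M = uv · det M′, where M′ is the l × l matrix whose first column is β + γ and whose remaining columns are the columns of A. (This is the effect of a Reidemeister (Ia) move on the Alexander matrix of a virtual knot diagram.) -/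
/-!
The second column of `M` has the single nonzero entry `v`, so expanding along it leaves the
minor with first row `(u, -u, 0, …, 0)` and rows `(βᵢ, γᵢ, Aᵢ)`. Adding its first column to its
second clears the `-u` and turns `γ` into `β + γ`; expanding along the first row then gives
`u · det [β + γ | A]`.
-/

namespace Matrix

variable {R : Type*} [CommRing R] {n : ℕ}

theorem det_succ_column_of_ne_eq_zero (M : Matrix (Fin (n + 1)) (Fin (n + 1)) R)
    {i j : Fin (n + 1)} (h : ∀ k ≠ i, M k j = 0) :
    M.det = (-1) ^ (i + j : ℕ) * M i j * (M.submatrix i.succAbove j.succAbove).det := by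
  rw [det_succ_column M j, Finset.sum_eq_single i (fun k _ hk => by simp [h k hk]) (by simp)]

theorem det_succ_row_of_ne_eq_zero (M : Matrix (Fin (n + 1)) (Fin (n + 1)) R)
    {i j : Fin (n + 1)} (h : ∀ k ≠ j, M i k = 0) :
    M.det = (-1) ^ (i + j : ℕ) * M i j * (M.submatrix i.succAbove j.succAbove).det := by
  rw [det_succ_row M i, Finset.sum_eq_single j (fun k _ hk => by simp [h k hk]) (by simp)]

end Matrix

open Matrix

section

variable {R : Type*} [CommRing R] {n m : ℕ}

def reidemeisterIaMatrix (u v : R) (β γ : Fin n → R) (A : Matrix (Fin n) (Fin m) R) :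
    Matrix (Fin (n + 2)) (Fin (m + 3)) R :=
  of <| vecCons (vecCons u (vecCons 0 (vecCons (-u) 0))) <|
    vecCons (vecCons (-1) (vecCons v 0)) fun i => vecCons (β i) (vecCons 0 (vecCons (γ i) (A i)))

theorem det_vecCons_u_neg_u (u : R) (β γ : Fin (m + 1) → R) (A : Matrix (Fin (m + 1)) (Fin m) R) :
    (of <| vecCons (vecCons u (vecCons (-u) 0)) fun i => vecCons (β i) (vecCons (γ i) (A i))).det =
      u * (of fun i => vecCons (β i + γ i) (A i)).det := by
  set N := of <| vecCons (vecCons u (vecCons (-u) 0)) fun i => vecCons (β i) (vecCons (γ i) (A i))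
  rw [← det_updateCol_add_self N one_ne_zero]
  set N' := N.updateCol 1 fun k => N k 1 + N k 0
  have hrow : ∀ k ≠ 0, N' 0 k = 0 := by
    intro k hk
    obtain ⟨k, rfl⟩ := Fin.exists_succ_eq.2 hk
    cases k using Fin.cases <;> simp [N', N, Fin.succ_succ_ne_one]
  have hminor : N'.submatrix (Fin.succAbove 0) (Fin.succAbove 0) =
      of fun i => vecCons (β i + γ i) (A i) := by
    ext i j
    cases j using Fin.cases <;> simp [N', N, Fin.succ_succ_ne_one, add_comm]
  rw [det_succ_row_of_ne_eq_zero N' hrow, hminor]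
  simp [N', N]

theorem det_reidemeisterIaMatrix (u v : R) (β γ : Fin (m + 1) → R)
    (A : Matrix (Fin (m + 1)) (Fin m) R) :
    (reidemeisterIaMatrix u v β γ A).det = u * v * (of fun i => vecCons (β i + γ i) (A i)).det := by
  set M := reidemeisterIaMatrix u v β γ A
  have hcol : ∀ k ≠ 1, M k 1 = 0 := by
    rintro ⟨_ | _ | k, hk⟩ h1
    · simp [M, reidemeisterIaMatrix]
    · exact absurd rfl h1
    · simp [M, reidemeisterIaMatrix, cons_val_succ']
  have hminor : M.submatrix (Fin.succAbove 1) (Fin.succAbove 1) =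
      of (vecCons (vecCons u (vecCons (-u) 0)) fun i => vecCons (β i) (vecCons (γ i) (A i))) := by
    ext i j
    cases i using Fin.cases <;> cases j using Fin.cases <;> simp [M, reidemeisterIaMatrix]
  have hv : M 1 1 = v := by simp [M, reidemeisterIaMatrix]
  rw [det_succ_column_of_ne_eq_zero M hcol, hminor, det_vecCons_u_neg_u, hv, Fin.val_one]
  ring

end

/-- The effect of a Reidemeister (Ia) move on the Alexander matrix of a virtual
knot diagram: if `M` has first row `(u, 0, -u, 0, …, 0)`, second row
`(-1, v, 0, …, 0)`, and remaining rows `(βᵢ, 0, γᵢ, Aᵢ)`, then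
`det M = u v · det [β + γ | A]`. -/
theorem reidemeister_Ia_det {R : Type*} [CommRing R] (u v : R) (l : ℕ) (hl : 1 ≤ l)
    (A : Matrix (Fin l) (Fin (l - 1)) R) (β γ : Fin l → R)
    (M : Matrix (Fin (l + 2)) (Fin (l + 2)) R)
    (M' : Matrix (Fin l) (Fin l) R)
    (hM : M = Matrix.of fun (i j : Fin (l + 2)) =>
      if (i : ℕ) = 0 then
        (if (j : ℕ) = 0 then u else if (j : ℕ) = 2 then -u else 0)
      else if (i : ℕ) = 1 then
        (if (j : ℕ) = 0 then -1 else if (j : ℕ) = 1 then v else 0)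
      else
        (if h0 : (j : ℕ) = 0 then β ⟨(i : ℕ) - 2, by omega⟩
         else if h1 : (j : ℕ) = 1 then 0
         else if h2 : (j : ℕ) = 2 then γ ⟨(i : ℕ) - 2, by omega⟩
         else A ⟨(i : ℕ) - 2, by omega⟩ ⟨(j : ℕ) - 3, by omega⟩))
    (hM' : M' = Matrix.of fun (i j : Fin l) =>
      if h : (j : ℕ) = 0 then β i + γ i
      else A i ⟨(j : ℕ) - 1, by omega⟩) :
    M.det = u * v * M'.det := by
  obtain ⟨m, rfl⟩ := Nat.exists_eq_add_of_le' hl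
  have hM_eq : M = reidemeisterIaMatrix u v β γ A := by
    ext i j
    rcases i with ⟨_ | _ | i, hi⟩ <;> rcases j with ⟨_ | _ | _ | j, hj⟩ <;>
      simp [hM, reidemeisterIaMatrix, cons_val_succ']
  have hM'_eq : M' = of fun i => vecCons (β i + γ i) (A i) := by
    ext i j
    cases j using Fin.cases <;> simp [hM']
  rw [hM_eq, hM'_eq]
  exact det_reidemeisterIaMatrix u v β γ A
end

section
/- Let R be a commutative ring, u, v ∈ R, and m ≥ 1. With A, B, C, D and the block matrix M defined as follows — A = [[1, −1], [0, v]], B = [[−u, u], [0, −1]], C = [[−1, u], [v, −1]], D = [[1, −u], [0, 0]], and M the 2(m+1) × 2(m+1) block matrix with (1,1) block C, (1, m+1) block D, (i, i−1) block A and (i, i) block B for 2 ≤ i ≤ m+1, all other blocks zero — one has det M = (u − 1)(v − 1)(uv − 1) · Σ_{i=0}^{m−1} Σ_{j=i}^{m−1} v^i u^j. (This is the full statement of the base case Δ₀(VT(1,…,1)) for the virtual twist knot with m ones.) -/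
/-!
Taking the Schur complement of the last diagonal block `B` removes one block row and column
and replaces `D` by `D * W`, where `W = -B⁻¹A` is the transfer matrix of the recursion
`A xᵢ₋₁ + B xᵢ = 0`; hence `det M = (det B)ᵐ * det (C + D Wᵐ)`. Here `det B = u` and
`W = !![u⁻¹, v - u⁻¹; 0, v]` has explicit powers, so the determinant becomes an explicit
polynomial which factors as claimed. The invertibility of `u` needed on the way is obtained by
computing over the Laurent polynomials `R[T, T⁻¹]`, into which `R[X]` embeds, and then
evaluating `X` at `u`.
-/

open Matrix

section CyclicBlockBidiagonal

variable {R : Type*} [CommRing R] {n : Type*}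

/-- For `m = 0` the blocks `C` and `D` both sit at `(0, 0)` and add up. -/
def cyclicBlockBidiagonal (C D A B : Matrix n n R) (m : ℕ) :
    Matrix (Fin (m + 1) × n) (Fin (m + 1) × n) R :=
  of fun p q =>
    (if (p.1 : ℕ) = 0 ∧ (q.1 : ℕ) = 0 then C p.2 q.2 else 0)
    + (if (p.1 : ℕ) = 0 ∧ (q.1 : ℕ) = m then D p.2 q.2 else 0)
    + (if (q.1 : ℕ) + 1 = p.1 then A p.2 q.2 else 0)
    + (if 1 ≤ (p.1 : ℕ) ∧ (q.1 : ℕ) = p.1 then B p.2 q.2 else 0)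

theorem cyclicBlockBidiagonal_map {S : Type*} [CommRing S] (f : R →+* S)
    (C D A B : Matrix n n R) (m : ℕ) :
    (cyclicBlockBidiagonal C D A B m).map f
      = cyclicBlockBidiagonal (C.map f) (D.map f) (A.map f) (B.map f) m := by
  ext p q
  simp only [cyclicBlockBidiagonal, map_apply, of_apply, map_add]
  split_ifs <;> simp

variable [Fintype n] [DecidableEq n]

theorem det_cyclicBlockBidiagonal_zero (C D A B : Matrix n n R) :
    (cyclicBlockBidiagonal C D A B 0).det = (C + D).det := by
  rw [← det_submatrix_equiv_self (Equiv.uniqueProd n (Fin 1)).symm]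
  congr 1
  ext r s
  simp [cyclicBlockBidiagonal]

def finSuccProdEquiv (m : ℕ) : Fin (m + 1) × n ⊕ n ≃ Fin (m + 2) × n :=
  (Equiv.sumCongr (Equiv.refl _) (Equiv.uniqueProd n (Fin 1)).symm).trans <|
    (Equiv.sumProdDistrib _ _ _).symm.trans (Equiv.prodCongr finSumFinEquiv (Equiv.refl n))

theorem det_cyclicBlockBidiagonal_succ (C D A B : Matrix n n R) [Invertible B] (m : ℕ) :
    (cyclicBlockBidiagonal C D A B (m + 1)).det
      = B.det * (cyclicBlockBidiagonal C (D * -(⅟B * A)) A B m).det := by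
  let topRight : Matrix (Fin (m + 1) × n) n R :=
    of fun p s => if (p.1 : ℕ) = 0 then D p.2 s else 0
  let bottomLeft : Matrix n (Fin (m + 1) × n) R :=
    of fun s q => if (q.1 : ℕ) = m then A s q.2 else 0
  have hblocks : (cyclicBlockBidiagonal C D A B (m + 1)).submatrix
      (finSuccProdEquiv m) (finSuccProdEquiv m)
        = fromBlocks (cyclicBlockBidiagonal C 0 A B m) topRight bottomLeft B := by
    ext (⟨i, r⟩ | r) (⟨j, s⟩ | s) <;>
      simp [finSuccProdEquiv, cyclicBlockBidiagonal, topRight, bottomLeft,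
        -Fin.val_eq_zero_iff] <;>
      (try split_ifs) <;> first | omega | simp
  have hcorner : topRight * ⅟B * bottomLeft = of fun p q =>
      if (p.1 : ℕ) = 0 ∧ (q.1 : ℕ) = m then (D * ⅟B * A) p.2 q.2 else 0 := by
    ext p q
    by_cases hp : (p.1 : ℕ) = 0 <;> by_cases hq : (q.1 : ℕ) = m <;>
      simp [topRight, bottomLeft, mul_apply, hp, hq, -Fin.val_eq_zero_iff]
  rw [← det_submatrix_equiv_self (finSuccProdEquiv m), hblocks, det_fromBlocks₂₂, hcorner]
  congr 2
  ext p q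
  simp only [cyclicBlockBidiagonal, of_apply, Matrix.sub_apply, Matrix.mul_neg,
    ← Matrix.mul_assoc]
  split_ifs <;> first | omega | simp [sub_eq_add_neg]

theorem det_cyclicBlockBidiagonal (C D A B : Matrix n n R) [Invertible B] (m : ℕ) :
    (cyclicBlockBidiagonal C D A B m).det = B.det ^ m * (C + D * (-(⅟B * A)) ^ m).det := by
  induction m generalizing D with
  | zero => simp [det_cyclicBlockBidiagonal_zero]
  | succ m ih =>
    rw [det_cyclicBlockBidiagonal_succ, ih, pow_succ' (-(⅟B * A)), ← Matrix.mul_assoc,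
      pow_succ', mul_assoc (B.det)]

end CyclicBlockBidiagonal

theorem pow_fin_two_upper_sub {R : Type*} [CommRing R] (a b : R) (k : ℕ) :
    !![a, b - a; 0, b] ^ k = !![a ^ k, b ^ k - a ^ k; 0, b ^ k] := by
  induction k with
  | zero => simp [one_fin_two]
  | succ k ih =>
    rw [pow_succ, ih, mul_fin_two]
    ext i j
    fin_cases i <;> fin_cases j <;> simp <;> ring

theorem mul_sum_range_sum_Ico_pow_mul_pow {R : Type*} [CommRing R] (u v : R) (m : ℕ) :
    (u - 1) * (v - 1) * (u * v - 1)
        * ∑ i ∈ Finset.range m, ∑ j ∈ Finset.Ico i m, v ^ i * u ^ j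
      = u ^ m - 1 - u ^ (m + 1) * v + v - u ^ m * v ^ (m + 1) + u ^ (m + 1) * v ^ (m + 1) := by
  have hswap : (v - 1) * ∑ i ∈ Finset.range m, ∑ j ∈ Finset.Ico i m, v ^ i * u ^ j
      = v * ∑ j ∈ Finset.range m, (u * v) ^ j - ∑ j ∈ Finset.range m, u ^ j := by
    rw [Finset.range_eq_Ico, Finset.sum_Ico_Ico_comm, Finset.mul_sum, Finset.mul_sum,
      ← Finset.sum_sub_distrib]
    refine Finset.sum_congr rfl fun j _ => ?_
    rw [← Finset.sum_mul, ← Finset.range_eq_Ico, ← mul_assoc, mul_geom_sum]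
    ring
  linear_combination (u - 1) * (u * v - 1) * hswap + v * (u - 1) * mul_geom_sum (u * v) m
    - (u * v - 1) * mul_geom_sum u m

section VirtualTwistKnot

variable {R : Type*} [CommRing R]

open Polynomial

def vtOnesMatrix (u v : R) (m : ℕ) : Matrix (Fin (m + 1) × Fin 2) (Fin (m + 1) × Fin 2) R :=
  cyclicBlockBidiagonal !![-1, u; v, -1] !![1, -u; 0, 0] !![1, -1; 0, v] !![-u, u; 0, -1] m

theorem vtOnesMatrix_map {S : Type*} [CommRing S] (f : R →+* S) (u v : R) (m : ℕ) :
    (vtOnesMatrix u v m).map f = vtOnesMatrix (f u) (f v) m := by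
  rw [vtOnesMatrix, cyclicBlockBidiagonal_map, vtOnesMatrix]
  congr <;> ext i j <;> fin_cases i <;> fin_cases j <;> simp

theorem det_vtOnesMatrix_of_invertible (u v : R) [Invertible u] (m : ℕ) :
    (vtOnesMatrix u v m).det = (u - 1) * (v - 1) * (u * v - 1)
      * ∑ i ∈ Finset.range m, ∑ j ∈ Finset.Ico i m, v ^ i * u ^ j := by
  let := invertibleOfLeftInverse !![-u, u; 0, -1] !![-⅟u, -1; 0, -1]
    (by rw [mul_fin_two, one_fin_two]; simp)
  have htransfer : -(⅟!![-u, u; 0, -1] * !![1, -1; 0, v]) = !![⅟u, v - ⅟u; 0, v] := by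
    change -(!![-⅟u, -1; 0, -1] * !![1, -1; 0, v]) = _
    rw [mul_fin_two]
    ext i j
    fin_cases i <;> fin_cases j <;> simp [sub_eq_add_neg]
  have hpow : u ^ m * ⅟u ^ m = 1 := by rw [← mul_pow, mul_invOf_self, one_pow]
  rw [vtOnesMatrix, det_cyclicBlockBidiagonal, htransfer, pow_fin_two_upper_sub, det_fin_two_of,
    mul_fin_two, mul_sum_range_sum_Ico_pow_mul_pow]
  simp only [of_add_of, add_cons, head_cons, tail_cons, empty_add_empty, det_fin_two_of]
  linear_combination (v - 1) * hpow

theorem det_vtOnesMatrix (u v : R) (m : ℕ) :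
    (vtOnesMatrix u v m).det = (u - 1) * (v - 1) * (u * v - 1)
      * ∑ i ∈ Finset.range m, ∑ j ∈ Finset.Ico i m, v ^ i * u ^ j := by
  have hgeneric : (vtOnesMatrix (X : R[X]) (C v) m).det = (X - 1) * (C v - 1) * (X * C v - 1)
      * ∑ i ∈ Finset.range m, ∑ j ∈ Finset.Ico i m, C v ^ i * X ^ j := by
    apply toLaurent_injective
    let : Invertible (LaurentPolynomial.T 1 : LaurentPolynomial R) :=
      (LaurentPolynomial.isUnit_T 1).invertible
    rw [RingHom.map_det, RingHom.mapMatrix_apply, vtOnesMatrix_map, toLaurent_X,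
      det_vtOnesMatrix_of_invertible]
    simp
  have hu := congrArg (evalRingHom u) hgeneric
  rw [RingHom.map_det, RingHom.mapMatrix_apply, vtOnesMatrix_map] at hu
  simp only [coe_evalRingHom, eval_X, eval_C, X_mul_C, eval_mul, eval_sub, eval_one,
    eval_finsetSum, eval_pow] at hu
  linear_combination hu

end VirtualTwistKnot

/-- The base case `Δ₀(VT(1,…,1))` for the virtual twist knot with `m` ones:
the determinant of the Alexander matrix `M` factors as
`(u − 1)(v − 1)(uv − 1) · Σ_{0 ≤ i ≤ j ≤ m−1} vⁱ uʲ`. -/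
theorem det_VT_ones_matrix_factored {R : Type*} [CommRing R] (u v : R) (m : ℕ) (hm : 1 ≤ m)
    (A B C D : Matrix (Fin 2) (Fin 2) R)
    (hA : A = !![1, -1; 0, v]) (hB : B = !![-u, u; 0, -1])
    (hC : C = !![-1, u; v, -1]) (hD : D = !![1, -u; 0, 0])
    (M : Matrix (Fin (2 * (m + 1))) (Fin (2 * (m + 1))) R)
    (hM : M = Matrix.of fun (i j : Fin (2 * (m + 1))) =>
      if (i : ℕ) / 2 = 0 ∧ (j : ℕ) / 2 = 0 then
        C ⟨(i : ℕ) % 2, by omega⟩ ⟨(j : ℕ) % 2, by omega⟩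
      else if (i : ℕ) / 2 = 0 ∧ (j : ℕ) / 2 = m then
        D ⟨(i : ℕ) % 2, by omega⟩ ⟨(j : ℕ) % 2, by omega⟩
      else if 1 ≤ (i : ℕ) / 2 ∧ (j : ℕ) / 2 + 1 = (i : ℕ) / 2 then
        A ⟨(i : ℕ) % 2, by omega⟩ ⟨(j : ℕ) % 2, by omega⟩
      else if 1 ≤ (i : ℕ) / 2 ∧ (j : ℕ) / 2 = (i : ℕ) / 2 then
        B ⟨(i : ℕ) % 2, by omega⟩ ⟨(j : ℕ) % 2, by omega⟩
      else 0) :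
    M.det = (u - 1) * (v - 1) * (u * v - 1)
      * ∑ i ∈ Finset.range m, ∑ j ∈ Finset.Ico i m, v ^ i * u ^ j := by
  let e : Fin (2 * (m + 1)) ≃ Fin (m + 1) × Fin 2 :=
    (finCongr (Nat.mul_comm 2 (m + 1))).trans finProdFinEquiv.symm
  have hblocks : M = (cyclicBlockBidiagonal C D A B m).submatrix e e := by
    have hblock (i : Fin (2 * (m + 1))) : ((e i).1 : ℕ) = i / 2 := rfl
    have hentry (i : Fin (2 * (m + 1))) : (e i).2 = ⟨i % 2, by omega⟩ := rfl
    subst hM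
    ext i j
    simp only [submatrix_apply, cyclicBlockBidiagonal, of_apply, hblock, hentry]
    split_ifs <;> first | omega | simp
  rw [hblocks, det_submatrix_equiv_self, hA, hB, hC, hD]
  exact det_vtOnesMatrix u v m
end

section
/- Let F be a field, let u, v ∈ F with u ≠ 0, and let m be a natural number. Define the 2 × 2 matrices C = [[−1, u], [v, −1]], D = [[1, −u], [0, 0]], and X = [[−u⁻¹, u⁻¹ − v], [0, −v]] over F. Then det(C + (−1)^m · D · X^m) = 1 − u^{−m} − uv + v·u^{−m} − v^{m+1} + u·v^{m+1}. -/
/-- The determinant of the `(1,1)`-block after block triangularization of the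
Alexander matrix of `VT(1,…,1)`:
`det (C + (−1)ᵐ D Xᵐ) = 1 − u⁻ᵐ − uv + v u⁻ᵐ − vᵐ⁺¹ + u vᵐ⁺¹`. -/
theorem det_corner_block {F : Type*} [Field F] (u v : F) (hu : u ≠ 0) (m : ℕ)
    (C D X : Matrix (Fin 2) (Fin 2) F)
    (hC : C = !![-1, u; v, -1]) (hD : D = !![1, -u; 0, 0])
    (hX : X = !![-u⁻¹, u⁻¹ - v; 0, -v]) :
    (C + (-1 : F) ^ m • (D * X ^ m)).det
      = 1 - (u⁻¹) ^ m - u * v + v * (u⁻¹) ^ m - v ^ (m + 1) + u * v ^ (m + 1) := by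
  have hXm : X ^ m = !![(-1 : F) ^ m * (u⁻¹) ^ m, (-1 : F) ^ m * (v ^ m - (u⁻¹) ^ m); 0, (-1 : F) ^ m * v ^ m] := by
    induction m with
    | zero =>
      simp [Matrix.one_fin_two]
    | succ n ih =>
      rw [pow_succ, ih, hX]
      ext i j
      fin_cases i <;> fin_cases j <;>
        simp [Matrix.mul_apply, Fin.sum_univ_two, pow_succ] <;> ring
  subst hC hD
  rw [hXm]
  have h1 : (-1 : F) ^ m * (-1 : F) ^ m = 1 := by
    rw [← mul_pow]; simp
  simp [Matrix.det_fin_two, Matrix.mul_apply, Fin.sum_univ_two, pow_succ]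
  have h2 : (-1 : F) ^ (m * 2) = 1 := by
    rw [pow_mul, sq]; exact h1
  ring_nf
  rw [h2]
  ring
end

section
/- Let R be a commutative ring, u, v ∈ R, and m a natural number. Then −1 + u^m + v − u^{m+1}v − u^m v^{m+1} + u^{m+1}v^{m+1} = (u − 1)(v − 1)(uv − 1) · Σ_{i=0}^{m−1} Σ_{j=i}^{m−1} v^i u^j, where the double sum is empty (equal to 0) when m = 0. (This is the factorization of the polynomial Δ₀(VT(1,…,1)) for the virtual twist knot with m ones.) -/
/-- The factorization of the polynomial `Δ₀(VT(1,…,1))` for the virtual twist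
knot with `m` ones:
`−1 + uᵐ + v − uᵐ⁺¹v − uᵐvᵐ⁺¹ + uᵐ⁺¹vᵐ⁺¹ = (u−1)(v−1)(uv−1) Σ_{0≤i≤j≤m−1} vⁱuʲ`. -/
theorem VT_ones_factorization {R : Type*} [CommRing R] (u v : R) (m : ℕ) :
    -1 + u ^ m + v - u ^ (m + 1) * v - u ^ m * v ^ (m + 1) + u ^ (m + 1) * v ^ (m + 1)
      = (u - 1) * (v - 1) * (u * v - 1)
        * ∑ i ∈ Finset.range m, ∑ j ∈ Finset.Ico i m, v ^ i * u ^ j := by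
  induction m with
  | zero => simp
  | succ m ih =>
    have hstep : ∀ i ∈ Finset.range (m + 1),
        ∑ j ∈ Finset.Ico i (m + 1), v ^ i * u ^ j
          = (∑ j ∈ Finset.Ico i m, v ^ i * u ^ j) + v ^ i * u ^ m := by
      intro i hi
      rw [Finset.sum_Ico_succ_top (Nat.lt_succ_iff.mp (Finset.mem_range.mp hi))]
    rw [Finset.sum_congr rfl hstep, Finset.sum_add_distrib,
      Finset.sum_range_succ (fun i => ∑ j ∈ Finset.Ico i m, v ^ i * u ^ j)]
    simp only [Finset.Ico_self, Finset.sum_empty, add_zero]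
    have hgeom : (v - 1) * ∑ i ∈ Finset.range (m + 1), v ^ i = v ^ (m + 1) - 1 :=
      mul_comm (v - 1) _ ▸ geom_sum_mul v (m + 1)
    have : ∑ i ∈ Finset.range (m + 1), v ^ i * u ^ m
        = (∑ i ∈ Finset.range (m + 1), v ^ i) * u ^ m := by
      rw [Finset.sum_mul]
    rw [this, mul_add, ← ih]
    have h2 : (u - 1) * (v - 1) * (u * v - 1) * ((∑ i ∈ Finset.range (m + 1), v ^ i) * u ^ m)
        = (u - 1) * (u * v - 1) * ((v ^ (m + 1) - 1) * u ^ m) := by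
      rw [← hgeom]; ring
    rw [h2]
    ring
end

section
/- Let R be a commutative ring, u, v ∈ R, and m a natural number. Then v − uv − v^m + u^m v^m + u v^{m+1} − u^m v^{m+1} = −v·(u − 1)(v − 1)(uv − 1) · Σ_{i=0}^{m−2} Σ_{j=i}^{m−2} u^i v^j, where the double sum is empty (equal to 0) when m ≤ 1. (This is the factorization of the polynomial Δ₀(VT(0,1,…,1)) for the virtual twist knot with m ones and an initial zero block, up to the overall sign (−1)^{m+1}.) -/
private lemma VT_aux {R : Type*} [CommRing R] (u v : R) (k : ℕ) :
    v - u * v - v ^ (k + 1) + u ^ (k + 1) * v ^ (k + 1) + u * v ^ (k + 2)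
        - u ^ (k + 1) * v ^ (k + 2)
      = -v * (u - 1) * (v - 1) * (u * v - 1)
        * ∑ i ∈ Finset.range k, ∑ j ∈ Finset.Ico i k, u ^ i * v ^ j := by
  induction k with
  | zero => simp
  | succ k ih =>
    have hstep : ∑ i ∈ Finset.range (k + 1), ∑ j ∈ Finset.Ico i (k + 1), u ^ i * v ^ j
        = (∑ i ∈ Finset.range k, ∑ j ∈ Finset.Ico i k, u ^ i * v ^ j)
          + (∑ i ∈ Finset.range (k + 1), u ^ i) * v ^ k := by
      rw [Finset.sum_range_succ,
        Finset.sum_congr rfl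
          (fun i hi => Finset.sum_Ico_succ_top (Finset.mem_range.mp hi).le _),
        Finset.sum_add_distrib, Finset.sum_range_succ (f := fun i => u ^ i)]
      simp [Finset.sum_mul, add_mul]; ring
    rw [hstep]
    have hg := geom_sum_mul u (k + 1)
    linear_combination ih + v * (v - 1) * (u * v - 1) * v ^ k * hg

/-- The factorization of the polynomial `Δ₀(VT(0,1,…,1))` for the virtual twist
knot with `m` ones and an initial zero block, up to the overall sign `(−1)^{m+1}`:
`v − uv − vᵐ + uᵐvᵐ + uvᵐ⁺¹ − uᵐvᵐ⁺¹ = −v(u−1)(v−1)(uv−1) Σ_{0≤i≤j≤m−2} uⁱvʲ`. -/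
theorem VT_zero_ones_factorization {R : Type*} [CommRing R] (u v : R) (m : ℕ) :
    v - u * v - v ^ m + u ^ m * v ^ m + u * v ^ (m + 1) - u ^ m * v ^ (m + 1)
      = -v * (u - 1) * (v - 1) * (u * v - 1)
        * ∑ i ∈ Finset.range (m - 1), ∑ j ∈ Finset.Ico i (m - 1), u ^ i * v ^ j := by
  cases m with
  | zero => simp
  | succ k => simpa using VT_aux u v k
end

section
/- Let R be a commutative ring, u, v ∈ R, and m a natural number. Then −u + u^m + uv − u^{m+1}v − u^m v^m + u^{m+1}v^m = u·(u − 1)(v − 1)(uv − 1) · Σ_{i=0}^{m−2} Σ_{j=i}^{m−2} v^i u^j, where the double sum is empty (equal to 0) when m ≤ 1. (This is the factorization of the polynomial Δ₀(VT(1,…,1,0)) for the virtual twist knot with m ones and a final zero block.) -/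
private lemma aux {R : Type*} [CommRing R] (u v : R) (n : ℕ) :
    -u + u ^ (n+1) + u * v - u ^ (n + 2) * v - u ^ (n+1) * v ^ (n+1) + u ^ (n + 2) * v ^ (n+1)
      = u * (u - 1) * (v - 1) * (u * v - 1)
        * ∑ i ∈ Finset.range n, ∑ j ∈ Finset.Ico i n, v ^ i * u ^ j := by
  induction n with
  | zero => simp
  | succ n ih =>
    have hsum : ∑ i ∈ Finset.range (n+1), ∑ j ∈ Finset.Ico i (n+1), v ^ i * u ^ j
        = (∑ i ∈ Finset.range n, ∑ j ∈ Finset.Ico i n, v ^ i * u ^ j)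
          + (∑ i ∈ Finset.range (n+1), v ^ i) * u ^ n := by
      rw [Finset.sum_range_succ, Finset.sum_mul]
      rw [Finset.sum_congr rfl (fun i hi => Finset.sum_Ico_succ_top (Finset.mem_range.mp hi).le _)]
      rw [Finset.sum_add_distrib, Finset.sum_Ico_succ_top le_rfl, Finset.Ico_self,
        Finset.sum_empty, zero_add, Finset.sum_range_succ]
      ring
    have hg : (v - 1) * ∑ i ∈ Finset.range (n+1), v ^ i = v ^ (n+1) - 1 :=
      mul_geom_sum v (n+1)
    have key : u * (u - 1) * (v - 1) * (u * v - 1) * ((∑ i ∈ Finset.range (n+1), v ^ i) * u ^ n)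
        = u * (u - 1) * (u * v - 1) * u ^ n * (v ^ (n+1) - 1) := by
      rw [← hg]; ring
    rw [hsum, mul_add, ← ih, key]
    ring

/-- The factorization of the polynomial `Δ₀(VT(1,…,1,0))` for the virtual twist
knot with `m` ones and a final zero block:
`−u + uᵐ + uv − uᵐ⁺¹v − uᵐvᵐ + uᵐ⁺¹vᵐ = u(u−1)(v−1)(uv−1) Σ_{0≤i≤j≤m−2} vⁱuʲ`. -/
theorem VT_ones_zero_factorization {R : Type*} [CommRing R] (u v : R) (m : ℕ) :
    -u + u ^ m + u * v - u ^ (m + 1) * v - u ^ m * v ^ m + u ^ (m + 1) * v ^ m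
      = u * (u - 1) * (v - 1) * (u * v - 1)
        * ∑ i ∈ Finset.range (m - 1), ∑ j ∈ Finset.Ico i (m - 1), v ^ i * u ^ j := by
  cases m with
  | zero => simp
  | succ n => simpa using aux u v n
end

section
/- Let R be a commutative ring, u, v ∈ R, and m a natural number. Then 1 − u − v^m + u^{m+1}v^m + u v^{m+1} − u^{m+1}v^{m+1} = −(u − 1)(v − 1)(uv − 1) · Σ_{i=0}^{m−1} Σ_{j=i}^{m−1} u^i v^j, where the double sum is empty (equal to 0) when m = 0. (This is the factorization of the polynomial Δ₀(VT(0,1,…,1,0)) for the virtual twist knot with m ones and zero blocks at both ends, up to the overall sign (−1)^{m+1}.) -/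
/-- The factorization of the polynomial `Δ₀(VT(0,1,…,1,0))` for the virtual
twist knot with `m` ones and zero blocks at both ends, up to the overall sign
`(−1)^{m+1}`:
`1 − u − vᵐ + uᵐ⁺¹vᵐ + uvᵐ⁺¹ − uᵐ⁺¹vᵐ⁺¹ = −(u−1)(v−1)(uv−1) Σ_{0≤i≤j≤m−1} uⁱvʲ`. -/
theorem VT_zero_ones_zero_factorization {R : Type*} [CommRing R] (u v : R) (m : ℕ) :
    1 - u - v ^ m + u ^ (m + 1) * v ^ m + u * v ^ (m + 1) - u ^ (m + 1) * v ^ (m + 1)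
      = -((u - 1) * (v - 1) * (u * v - 1))
        * ∑ i ∈ Finset.range m, ∑ j ∈ Finset.Ico i m, u ^ i * v ^ j := by
  induction m with
  | zero => simp
  | succ m ih =>
    have hsum : ∑ i ∈ Finset.range (m + 1), ∑ j ∈ Finset.Ico i (m + 1), u ^ i * v ^ j
        = (∑ i ∈ Finset.range m, ∑ j ∈ Finset.Ico i m, u ^ i * v ^ j)
          + v ^ m * ∑ i ∈ Finset.range (m + 1), u ^ i := by
      rw [Finset.sum_range_succ, Finset.sum_Ico_succ_top le_rfl, Finset.Ico_self,
        Finset.sum_empty, zero_add, Finset.mul_sum, Finset.sum_range_succ]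
      have h2 : ∀ x ∈ Finset.range m, ∑ j ∈ Finset.Ico x (m + 1), u ^ x * v ^ j
          = (∑ j ∈ Finset.Ico x m, u ^ x * v ^ j) + v ^ m * u ^ x := by
        intro x hx
        rw [Finset.sum_Ico_succ_top (Finset.mem_range.mp hx).le]; ring
      rw [Finset.sum_congr rfl h2, Finset.sum_add_distrib]; ring
    have hg : (u - 1) * ∑ i ∈ Finset.range (m + 1), u ^ i = u ^ (m + 1) - 1 := by
      rw [mul_comm]; exact geom_sum_mul u (m + 1)
    rw [hsum, mul_add]
    rw [← ih]
    have : -((u - 1) * (v - 1) * (u * v - 1)) * (v ^ m * ∑ i ∈ Finset.range (m + 1), u ^ i)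
        = -((v - 1) * (u * v - 1)) * (v ^ m * (u ^ (m + 1) - 1)) := by
      rw [← hg]; ring
    rw [this]
    ring
end
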